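/- arXiv:2101.05931 — 2 statements merged into one kernel-verified Lean document; each statement's English description precedes it below -/
import Mathlib

section
/- Let A = k[x]/(x²), and let M be a finite-dimensional A-module. Consider the two-term complex of A-modules Θ(M) = (A ⊗_k M → M), with differential the action map a ⊗ m ↦ a·m, where M sits in cohomological degree 0. Then Θ(M) is quasi-isomorphic to M'[1], where M' is the twist of M by the algebra automorphism of A sending a + bx ↦ a - bx. -/
open TensorProduct DualNumber

set_option maxHeartbeats 1000000 in
/-- Let `A = k[x]/(x²)` (the dual numbers over a field `k`) and let `M`
be a finite-dimensional `A`-module.  Consider the two-term complex of `A`-modules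
`Θ(M) = (A ⊗_k M → M)` with differential the action map `a ⊗ m ↦ a • m` and `M` in
cohomological degree `0`.  Then `Θ(M)` is quasi-isomorphic to `M'[1]`, where `M'` is the
twist of `M` by the automorphism `ψ : a + bx ↦ a - bx` of `A`; equivalently (as the complex
has only two terms) the action map `μ` is surjective and its kernel is isomorphic to `M`
as an `A`-module twisted by `ψ`, i.e. there is a `k`-linear bijection
`e : ker μ ≃ M` with `e (a • v) = ψ(a) • e v`. -/
theorem rickard_complex_dual_numbers
    {k : Type*} [Field k] {M : Type*} [AddCommGroup M]
    [Module (DualNumber k) M] [Module k M] [IsScalarTower k (DualNumber k) M]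
    [FiniteDimensional k M]
    (ψ : DualNumber k ≃ₐ[k] DualNumber k)
    (hψ : ∀ a b : k, ψ (algebraMap k (DualNumber k) a + b • ε) =
      algebraMap k (DualNumber k) a - b • ε)
    (μ : DualNumber k ⊗[k] M →ₗ[DualNumber k] M)
    (hμ : ∀ (a : DualNumber k) (m : M), μ (a ⊗ₜ m) = a • m) :
    Function.Surjective μ ∧
      ∃ e : LinearMap.ker μ →ₗ[k] M, Function.Bijective e ∧
        ∀ (a : DualNumber k) (v : LinearMap.ker μ), e (a • v) = ψ a • e v := by
  classical
  -- coefficient-extraction linear maps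
  let e₀ : DualNumber k ⊗[k] M →ₗ[k] M :=
    TensorProduct.lift ((LinearMap.lsmul k M).comp (TrivSqZeroExt.sndHom k k))
  let f₀ : DualNumber k ⊗[k] M →ₗ[k] M :=
    TensorProduct.lift ((LinearMap.lsmul k M).comp (TrivSqZeroExt.fstHom k k k).toLinearMap)
  have he₀ : ∀ (a : DualNumber k) (m : M), e₀ (a ⊗ₜ m) = a.snd • m := by
    intro a m; simp [e₀]
  have hf₀ : ∀ (a : DualNumber k) (m : M), f₀ (a ⊗ₜ m) = a.fst • m := by
    intro a m; simp [f₀]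
  have hdecomp : ∀ v : DualNumber k ⊗[k] M,
      v = (1 : DualNumber k) ⊗ₜ[k] f₀ v + ε ⊗ₜ[k] e₀ v := by
    intro v
    induction v using TensorProduct.induction_on with
    | zero => simp
    | tmul a m =>
        rw [he₀, hf₀, ← TensorProduct.smul_tmul, ← TensorProduct.smul_tmul,
          ← TensorProduct.add_tmul]
        congr 1
        ext <;>
          simp only [DualNumber.eps, TrivSqZeroExt.fst_add, TrivSqZeroExt.snd_add,
            TrivSqZeroExt.fst_smul, TrivSqZeroExt.snd_smul, TrivSqZeroExt.fst_one,
            TrivSqZeroExt.snd_one, TrivSqZeroExt.fst_inr, TrivSqZeroExt.snd_inr,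
            smul_zero, smul_eq_mul, mul_zero, mul_one, zero_add, add_zero]
    | add x y hx hy =>
        rw [map_add, map_add, TensorProduct.tmul_add, TensorProduct.tmul_add]
        conv_lhs => rw [hx, hy]
        abel
  have hμv : ∀ v : DualNumber k ⊗[k] M, μ v = f₀ v + (ε : DualNumber k) • e₀ v := by
    intro v
    conv_lhs => rw [hdecomp v]
    rw [map_add, hμ, hμ, one_smul]
  have hker : ∀ v ∈ LinearMap.ker μ, f₀ v = -((ε : DualNumber k) • e₀ v) := by
    intro v hv
    rw [LinearMap.mem_ker, hμv] at hv
    exact eq_neg_of_add_eq_zero_left hv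
  constructor
  · intro m
    exact ⟨(1 : DualNumber k) ⊗ₜ m, by rw [hμ, one_smul]⟩
  · refine ⟨e₀.comp ((LinearMap.ker μ).subtype.restrictScalars k), ?_, ?_⟩
    · constructor
      · intro v w h
        simp only [LinearMap.comp_apply, LinearMap.restrictScalars_apply,
          Submodule.subtype_apply] at h
        apply Subtype.ext
        rw [hdecomp (v : DualNumber k ⊗[k] M), hdecomp (w : DualNumber k ⊗[k] M),
          hker _ v.2, hker _ w.2, h]
      · intro m
        refine ⟨⟨ε ⊗ₜ m + (1 : DualNumber k) ⊗ₜ (-((ε : DualNumber k) • m)), ?_⟩, ?_⟩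
        · rw [LinearMap.mem_ker, map_add, hμ, hμ, one_smul, add_neg_cancel]
        · simp only [LinearMap.comp_apply, LinearMap.restrictScalars_apply,
            Submodule.subtype_apply, map_add, he₀]
          simp only [DualNumber.eps, TrivSqZeroExt.snd_inr, TrivSqZeroExt.snd_one,
            one_smul, zero_smul, add_zero]
    · intro a v
      simp only [LinearMap.comp_apply, LinearMap.restrictScalars_apply,
        Submodule.subtype_apply, Submodule.coe_smul]
      have hm1 : f₀ (v : DualNumber k ⊗[k] M) = -((ε : DualNumber k) • e₀ (v : DualNumber k ⊗[k] M)) :=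
        hker _ v.2
      have ha : a = algebraMap k (DualNumber k) a.fst + a.snd • (ε : DualNumber k) := by
        ext <;>
          simp only [DualNumber.eps, TrivSqZeroExt.fst_add, TrivSqZeroExt.snd_add,
            TrivSqZeroExt.algebraMap_eq_inl', TrivSqZeroExt.fst_inl, TrivSqZeroExt.snd_inl,
            TrivSqZeroExt.fst_smul, TrivSqZeroExt.snd_smul, TrivSqZeroExt.fst_inr,
            TrivSqZeroExt.snd_inr, smul_zero, smul_eq_mul, mul_zero, mul_one, zero_add,
            add_zero, Algebra.algebraMap_self_apply]
      calc e₀ (a • (v : DualNumber k ⊗[k] M))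
          = a.snd • f₀ (v : DualNumber k ⊗[k] M)
            + (a * (ε : DualNumber k)).snd • e₀ (v : DualNumber k ⊗[k] M) := by
            conv_lhs => rw [hdecomp (v : DualNumber k ⊗[k] M)]
            rw [smul_add, TensorProduct.smul_tmul', TensorProduct.smul_tmul',
              smul_eq_mul, smul_eq_mul, mul_one, map_add, he₀, he₀]
        _ = a.fst • e₀ (v : DualNumber k ⊗[k] M)
            - a.snd • ((ε : DualNumber k) • e₀ (v : DualNumber k ⊗[k] M)) := by
            rw [hm1, smul_neg]
            simp only [DualNumber.eps, TrivSqZeroExt.snd_mul, TrivSqZeroExt.fst_inr,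
              TrivSqZeroExt.snd_inr, smul_eq_mul, mul_one, MulOpposite.op_zero, zero_smul,
              add_zero]
            abel
        _ = ψ a • e₀ (v : DualNumber k ⊗[k] M) := by
            conv_rhs => rw [ha, hψ a.fst a.snd]
            rw [sub_smul, algebraMap_smul, smul_assoc]
end

section
/- Let B be a crystal in the sense of Kashiwara for a finite-type simply-laced root system, and suppose ξ: B(λ) → B(λ) is a set map satisfying wt(ξ(b)) = w_0(wt(b)), ξ(ẽ_i(b)) = f̃_{τ(i)}(ξ(b)), and ξ(f̃_i(b)) = ẽ_{τ(i)}(ξ(b)) for all b and i, where τ is defined by α_{τ(i)} = -w_0(α_i). Then ξ is uniquely determined by these properties and ξ² = id, i.e. ξ is an involution. -/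
/-!
Every element of `B(λ)` is `f̃_{i_k} ⋯ f̃_{i_1} b_λ` for some word, so two maps out of `B(λ)`
agree once they agree at `b_λ` and the agreement propagates along each arrow `b ⟶ f̃_i b`.
For `ξ'` against `ξ` the propagation holds because both send `f̃_i b` to `ẽ_{τ i}` of the same
element; for `ξ ∘ ξ` against `id` because `ξ` turns `f̃_i` into `ẽ_{τ i}` and back into
`f̃_{τ (τ i)} = f̃_i`. At `b_λ` the weights decide: `ξ' b_λ` and `ξ b_λ` both have the lowest
weight `w₀ (wt b_λ)`, and `ξ (ξ b_λ)` has weight `w₀ (w₀ (wt b_λ)) = wt b_λ`.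
-/

theorem List.foldl_bind_induction {I α : Type*} (f : I → α → Option α) {P : α → Prop}
    (hstep : ∀ i x y, f i x = some y → P x → P y) :
    ∀ (l : List I) {a b : α}, P a →
      l.foldl (fun ob i => ob.bind (f i)) (some a) = some b → P b
  | [], _, _, ha, hab => Option.some.inj hab ▸ ha
  | i :: l, a, b, ha, hab => by
    rw [List.foldl_cons, Option.bind_some] at hab
    cases hfa : f i a with
    | none =>
      rw [hfa, List.foldl_fixed' (fun _ => rfl)] at hab
      exact absurd hab (Option.some_ne_none _).symm
    | some a' =>
      rw [hfa] at hab
      exact List.foldl_bind_induction f hstep l (hstep i a a' hfa ha) hab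

theorem schutzenberger_involution_unique_and_involutive_general
    {I BB X : Type*}
    (e f : I → BB → Option BB) (wt : BB → X)
    (w₀ : X → X) (hw₀ : ∀ x, w₀ (w₀ x) = x)
    (τ : I → I) (hτ : ∀ i, τ (τ i) = i)
    (bhigh : BB)
    (hgen : ∀ b : BB, ∃ l : List I,
      l.foldl (fun ob i => ob.bind (f i)) (some bhigh) = some b)
    (huniq_hi : ∀ b, wt b = wt bhigh → b = bhigh)
    (huniq_lo : ∀ b b', wt b = w₀ (wt bhigh) → wt b' = w₀ (wt bhigh) → b = b')
    (ξ : BB → BB)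
    (hξwt : ∀ b, wt (ξ b) = w₀ (wt b))
    (hξe : ∀ i b, (e i b).map ξ = f (τ i) (ξ b))
    (hξf : ∀ i b, (f i b).map ξ = e (τ i) (ξ b)) :
    (∀ ξ' : BB → BB, (∀ b, wt (ξ' b) = w₀ (wt b)) →
      (∀ i b, (e i b).map ξ' = f (τ i) (ξ' b)) →
      (∀ i b, (f i b).map ξ' = e (τ i) (ξ' b)) → ξ' = ξ) ∧
    Function.Involutive ξ := by
  have eq_of_eq_at_bhigh : ∀ g h : BB → BB, g bhigh = h bhigh →
      (∀ i x y, f i x = some y → g x = h x → g y = h y) → g = h :=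
    fun g h hhigh hstep => funext fun b =>
      let ⟨l, hl⟩ := hgen b
      List.foldl_bind_induction f hstep l hhigh hl
  constructor
  · intro ξ' hwt' _ hf'
    refine eq_of_eq_at_bhigh ξ' ξ (huniq_lo _ _ (hwt' bhigh) (hξwt bhigh)) ?_
    intro i x y hxy hx
    have h := (hf' i x).trans (hx ▸ (hξf i x).symm)
    rw [hxy, Option.map_some, Option.map_some] at h
    exact Option.some.inj h
  · refine congrFun (eq_of_eq_at_bhigh (ξ ∘ ξ) id ?_ ?_)
    · exact huniq_hi _ (by rw [Function.comp_apply, hξwt, hξwt, hw₀])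
    intro i x y hxy hx
    have h := hξe (τ i) (ξ x)
    rw [← hξf, hxy, hτ, Option.map_some, Option.map_some] at h
    rw [show ξ (ξ x) = x from hx, hxy] at h
    exact Option.some.inj h

/-- Let `B(λ)` be the connected highest-weight crystal of the
irreducible representation `L(λ)` of a finite-type simply-laced root system: a finite set
`BB` with crystal operators `e i, f i : BB → Option BB` (with `none` playing the role of
`0`), weight function `wt`, a unique highest weight element `bhigh` (killed by all `e i`,
unique of its weight, generating `BB` under the `f i`), and a unique element of lowest
weight `w₀ (wt bhigh)`.  Suppose `ξ : BB → BB` satisfies `wt (ξ b) = w₀ (wt b)`,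
`ξ (ẽ_i b) = f̃_{τ i} (ξ b)` and `ξ (f̃_i b) = ẽ_{τ i} (ξ b)` for all `b, i`, where
`w₀` and the diagram automorphism `τ` (defined by `α_{τ i} = -w₀ α_i`) are involutions.
Then `ξ` is uniquely determined by these properties, and `ξ² = id`. -/
theorem schutzenberger_involution_unique_and_involutive
    {I BB X : Type*} [Finite BB] [AddCommGroup X]
    (e f : I → BB → Option BB) (wt : BB → X)
    (w₀ : X → X) (hw₀ : ∀ x, w₀ (w₀ x) = x)
    (τ : I → I) (hτ : ∀ i, τ (τ i) = i)
    (hef : ∀ i b b', e i b = some b' ↔ f i b' = some b)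
    (bhigh : BB) (hhw : ∀ i, e i bhigh = none)
    (hgen : ∀ b : BB, ∃ l : List I,
      l.foldl (fun ob i => ob.bind (f i)) (some bhigh) = some b)
    (huniq_hi : ∀ b, wt b = wt bhigh → b = bhigh)
    (huniq_lo : ∀ b b', wt b = w₀ (wt bhigh) → wt b' = w₀ (wt bhigh) → b = b')
    (ξ : BB → BB)
    (hξwt : ∀ b, wt (ξ b) = w₀ (wt b))
    (hξe : ∀ i b, (e i b).map ξ = f (τ i) (ξ b))
    (hξf : ∀ i b, (f i b).map ξ = e (τ i) (ξ b)) :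
    (∀ ξ' : BB → BB, (∀ b, wt (ξ' b) = w₀ (wt b)) →
      (∀ i b, (e i b).map ξ' = f (τ i) (ξ' b)) →
      (∀ i b, (f i b).map ξ' = e (τ i) (ξ' b)) → ξ' = ξ) ∧
    Function.Involutive ξ :=
  schutzenberger_involution_unique_and_involutive_general e f wt w₀ hw₀ τ hτ bhigh hgen huniq_hi
    huniq_lo ξ hξwt hξe hξf
end
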